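/- Let G be an additive abelian group and let g, h ∈ G satisfy 2g = 2h, ord(g) = ord(h) = 10, and g ≠ h. Let S = {g, h, g+h, g+2h, 2g+h, 4g+4h}. Then S is a zero-sum free subset of G with |S| = 6 and |Σ(S)| = 19. -/
import Mathlib


open Finset

def sigmaSet {G : Type*} [AddCommGroup G] [DecidableEq G] (S : Finset G) : Finset G :=
  (S.powerset.filter (· ≠ ∅)).image (fun T => T.sum id)

def ZeroSumFree {G : Type*} [AddCommGroup G] (S : Finset G) : Prop :=
  ∀ T ⊆ S, T ≠ ∅ → T.sum id ≠ 0

section Aux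

lemma sigmaSet_empty' {G : Type*} [AddCommGroup G] [DecidableEq G] :
    sigmaSet (∅ : Finset G) = ∅ := by
  simp [sigmaSet, Finset.filter_singleton]

lemma sigmaSet_insert' {G : Type*} [AddCommGroup G] [DecidableEq G] (a : G) (S : Finset G)
    (ha : a ∉ S) :
    sigmaSet (insert a S) = insert a (sigmaSet S ∪ (sigmaSet S).image (a + ·)) := by
  ext x
  simp only [sigmaSet, mem_image, mem_filter, mem_powerset, mem_insert, mem_union]
  constructor
  · rintro ⟨T, ⟨hT, hne⟩, rfl⟩
    by_cases haT : a ∈ T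
    · have haT' : a ∉ T.erase a := notMem_erase a T
      have hTi : T = insert a (T.erase a) := (insert_erase haT).symm
      have hT' : T.erase a ⊆ S := by
        intro x hx
        rcases mem_insert.mp (hT (erase_subset _ _ hx)) with rfl | hxs
        · exact absurd hx haT'
        · exact hxs
      rcases eq_or_ne (T.erase a) ∅ with he | he
      · left; rw [hTi, he]; simp
      · right; right
        exact ⟨(T.erase a).sum id, ⟨T.erase a, ⟨hT', he⟩, rfl⟩, by
          conv_rhs => rw [hTi]
          rw [sum_insert haT']; rfl⟩
    · have : T ⊆ S := fun x hx => by
        rcases mem_insert.mp (hT hx) with rfl | h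
        · exact absurd hx haT
        · exact h
      right; left; exact ⟨T, ⟨this, hne⟩, rfl⟩
  · rintro (hxa | ⟨T, ⟨hT, hne⟩, rfl⟩ | ⟨y, ⟨T, ⟨hT, hne⟩, rfl⟩, rfl⟩)
    · exact ⟨({a} : Finset G), ⟨by simp, by simp⟩, by simp [hxa]⟩
    · exact ⟨T, ⟨hT.trans (subset_insert a S), hne⟩, rfl⟩
    · have haT : a ∉ T := fun hc => ha (hT hc)
      exact ⟨insert a T, ⟨insert_subset_insert a hT, insert_ne_empty a T⟩, by
        rw [sum_insert haT]; rfl⟩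

lemma sigmaSet_image' {G H : Type*} [AddCommGroup G] [AddCommGroup H] [DecidableEq G]
    [DecidableEq H] (φ : G →+ H) (hφ : Function.Injective φ) (S : Finset G) :
    sigmaSet (S.image φ) = (sigmaSet S).image φ := by
  ext x
  simp only [sigmaSet, mem_image, mem_filter, mem_powerset]
  constructor
  · rintro ⟨T, ⟨hTs, hTne⟩, rfl⟩
    obtain ⟨T', hT's, rfl⟩ := Finset.subset_image_iff.mp hTs
    refine ⟨T'.sum id, ⟨T', ⟨hT's, ?_⟩, rfl⟩, ?_⟩
    · rintro rfl; simp at hTne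
    · rw [Finset.sum_image (fun a _ b _ hab => hφ hab)]
      simp [map_sum]
  · rintro ⟨y, ⟨T, ⟨hTs, hTne⟩, rfl⟩, rfl⟩
    refine ⟨T.image φ, ⟨Finset.image_subset_image hTs, by simpa using hTne⟩, ?_⟩
    rw [Finset.sum_image (fun a _ b _ hab => hφ hab)]
    simp [map_sum]

noncomputable def phiAux {G : Type*} [AddCommGroup G] (g d : G)
    (hg10 : (10:ℤ) • g = 0) (hd2 : (2:ℤ) • d = 0) :
    ZMod 10 × ZMod 2 →+ G :=
  (ZMod.lift 10 ⟨zmultiplesHom G g, hg10⟩).coprod (ZMod.lift 2 ⟨zmultiplesHom G d, hd2⟩)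

lemma phiAux_apply {G : Type*} [AddCommGroup G] (g d : G)
    (hg10 : (10:ℤ) • g = 0) (hd2 : (2:ℤ) • d = 0) (a : ZMod 10) (b : ZMod 2) :
    phiAux g d hg10 hd2 (a, b) = a.val • g + b.val • d := by
  have ha : ((a.val : ℤ) : ZMod 10) = a := by
    rw [Int.cast_natCast]; exact ZMod.natCast_rightInverse a
  have hb : ((b.val : ℤ) : ZMod 2) = b := by
    rw [Int.cast_natCast]; exact ZMod.natCast_rightInverse b
  conv_lhs => rw [phiAux, AddMonoidHom.coprod_apply, ← ha, ← hb, ZMod.lift_coe, ZMod.lift_coe]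
  simp only [zmultiplesHom_apply, natCast_zsmul]

end Aux

set_option maxRecDepth 40000 in
theorem stmt15 {G : Type*} [AddCommGroup G] [DecidableEq G] (g h : G)
    (h2 : 2 • g = 2 • h) (hg : addOrderOf g = 10) (hh : addOrderOf h = 10)
    (hne : g ≠ h) :
    ZeroSumFree ({g, h, g + h, g + 2 • h, 2 • g + h, 4 • g + 4 • h} : Finset G) ∧
      ({g, h, g + h, g + 2 • h, 2 • g + h, 4 • g + 4 • h} : Finset G).card = 6 ∧
      (sigmaSet ({g, h, g + h, g + 2 • h, 2 • g + h, 4 • g + 4 • h} : Finset G)).card = 19 := by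
  set d := h - g with hd
  have hg10n : (10:ℕ) • g = 0 := by rw [← hg]; exact addOrderOf_nsmul_eq_zero g
  have hg10 : (10:ℤ) • g = 0 := by exact_mod_cast hg10n
  have hd2n : (2:ℕ) • d = 0 := by rw [hd, smul_sub, ← h2, sub_self]
  have hd2 : (2:ℤ) • d = 0 := by exact_mod_cast hd2n
  set φ := phiAux g d hg10 hd2 with hφ
  -- kernel triviality
  have hker : ∀ x : ZMod 10 × ZMod 2, φ x = 0 → x = 0 := by
    rintro ⟨a, b⟩ hx
    rw [hφ, phiAux_apply] at hx
    have hb01 : ∀ b : ZMod 2, b = 0 ∨ b = 1 := by decide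
    have hav : a.val < 10 := ZMod.val_lt a
    rcases hb01 b with rfl | rfl
    · simp only [ZMod.val_zero, zero_smul, add_zero] at hx
      have hdvd := addOrderOf_dvd_of_nsmul_eq_zero hx
      rw [hg] at hdvd
      have : a.val = 0 := by omega
      have ha0 : a = 0 := (ZMod.val_eq_zero a).mp this
      simp [ha0]
    · have hbv : (1 : ZMod 2).val = 1 := rfl
      rw [hbv, one_smul] at hx
      have h2x : ((2 * a.val) • g : G) = 0 := by
        have := congrArg (fun x => (2:ℕ) • x) hx
        simp only [smul_add, smul_zero] at this
        rw [hd2n, add_zero, ← mul_smul] at this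
        exact this
      have hdvd := addOrderOf_dvd_of_nsmul_eq_zero h2x
      rw [hg] at hdvd
      have : a.val = 0 ∨ a.val = 5 := by omega
      rcases this with h0 | h5
      · rw [h0, zero_smul, zero_add] at hx
        exact absurd (by rw [← sub_eq_zero]; exact hx : h = g) (Ne.symm hne)
      · exfalso
        have h5d : (5:ℕ) • d = d := by
          rw [show (5:ℕ) = 2*2+1 from rfl, add_smul, one_smul, mul_smul, hd2n, smul_zero,
            zero_add]
        have h5h : (5:ℕ) • h = 0 := by
          have e1 : (5:ℕ) • h = (5:ℕ) • g + (5:ℕ) • d := by rw [hd, smul_sub]; abel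
          rw [e1, h5d, ← h5, hx]
        have hdvd2 := addOrderOf_dvd_of_nsmul_eq_zero h5h
        rw [hh] at hdvd2
        omega
  have hinj : Function.Injective φ := by
    intro x y hxy
    have : φ (x - y) = 0 := by rw [map_sub, hxy, sub_self]
    have := hker _ this
    exact sub_eq_zero.mp this
  have hgd : h = g + d := by rw [hd]; abel
  -- the six images
  have e1 : φ (1, 0) = g := by
    rw [hφ, phiAux_apply]
    norm_num [ZMod.val_zero, show (1 : ZMod 10).val = 1 from rfl]
  have e2 : φ (1, 1) = h := by
    rw [hφ, phiAux_apply, show (1 : ZMod 10).val = 1 from rfl,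
      show (1 : ZMod 2).val = 1 from rfl, one_smul, one_smul, hgd]
  have e3 : φ (2, 1) = g + h := by
    rw [hφ, phiAux_apply, show (2 : ZMod 10).val = 2 from rfl,
      show (1 : ZMod 2).val = 1 from rfl, one_smul, hgd]
    abel
  have e4 : φ (3, 0) = g + 2 • h := by
    rw [hφ, phiAux_apply, show (3 : ZMod 10).val = 3 from rfl, ZMod.val_zero, zero_smul,
      add_zero, ← h2]
    abel
  have e5 : φ (3, 1) = 2 • g + h := by
    rw [hφ, phiAux_apply, show (3 : ZMod 10).val = 3 from rfl,
      show (1 : ZMod 2).val = 1 from rfl, one_smul, hgd]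
    abel
  have e6 : φ (8, 0) = 4 • g + 4 • h := by
    rw [hφ, phiAux_apply, show (8 : ZMod 10).val = 8 from rfl, ZMod.val_zero, zero_smul,
      add_zero, show (4:ℕ) • h = 2 • (2 • h) from by rw [← mul_smul]; norm_num, ← h2, ← mul_smul]
    abel
  have himg :
      ({g, h, g + h, g + 2 • h, 2 • g + h, 4 • g + 4 • h} : Finset G) =
        ({(1,0),(1,1),(2,1),(3,0),(3,1),(8,0)} : Finset (ZMod 10 × ZMod 2)).image φ := by
    rw [image_insert, image_insert, image_insert, image_insert, image_insert, image_singleton,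
      e1, e2, e3, e4, e5, e6]
  -- compute sigmaSet over ZMod 10 × ZMod 2 step by step
  have s1 : sigmaSet ({(8,0)} : Finset (ZMod 10 × ZMod 2)) = {(8,0)} := by
    rw [show ({(8,0)} : Finset (ZMod 10 × ZMod 2)) = insert (8,0) ∅ from rfl,
      sigmaSet_insert' _ _ (by decide), sigmaSet_empty']
    decide
  have s2 : sigmaSet ({(3,1),(8,0)} : Finset (ZMod 10 × ZMod 2)) =
      {(3,1),(8,0),(1,1)} := by
    rw [sigmaSet_insert' _ _ (by decide), s1]; decide
  have s3 : sigmaSet ({(3,0),(3,1),(8,0)} : Finset (ZMod 10 × ZMod 2)) =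
      {(3,0),(3,1),(6,1),(8,0),(1,0),(1,1),(4,1)} := by
    rw [sigmaSet_insert' _ _ (by decide), s2]; decide
  have s4 : sigmaSet ({(2,1),(3,0),(3,1),(8,0)} : Finset (ZMod 10 × ZMod 2)) =
      {(2,1),(5,1),(5,0),(6,1),(8,0),(0,1),(1,0),(3,1),(1,1),(3,0),(4,1),(6,0)} := by
    rw [sigmaSet_insert' _ _ (by decide), s3]; decide
  have s5 : sigmaSet ({(1,1),(2,1),(3,0),(3,1),(8,0)} : Finset (ZMod 10 × ZMod 2)) =
      {(5,1),(6,1),(7,0),(8,0),(9,1),(0,1),(1,0),(2,1),(3,1),(4,0),(1,1),(2,0),(3,0),(4,1),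
        (5,0),(6,0),(7,1)} := by
    rw [sigmaSet_insert' _ _ (by decide), s4]; decide
  have s6 : sigmaSet ({(1,0),(1,1),(2,1),(3,0),(3,1),(8,0)} : Finset (ZMod 10 × ZMod 2)) =
      {(6,1),(8,0),(9,0),(9,1),(0,1),(1,0),(3,1),(1,1),(2,1),(2,0),(3,0),(4,0),(4,1),(5,1),
        (5,0),(6,0),(7,0),(7,1),(8,1)} := by
    rw [sigmaSet_insert' _ _ (by decide), s5]; decide
  refine ⟨?_, ?_, ?_⟩
  · -- zero-sum free
    intro T hT hTne hsum
    rw [himg] at hT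
    obtain ⟨T', hT's, rfl⟩ := Finset.subset_image_iff.mp hT
    have hT'ne : T' ≠ ∅ := by rintro rfl; simp at hTne
    have hmem : T'.sum id ∈ sigmaSet ({(1,0),(1,1),(2,1),(3,0),(3,1),(8,0)} :
        Finset (ZMod 10 × ZMod 2)) := by
      exact mem_image.mpr ⟨T', mem_filter.mpr ⟨mem_powerset.mpr hT's, hT'ne⟩, rfl⟩
    rw [s6] at hmem
    have hzero : T'.sum id = 0 := by
      apply hker
      rw [← hsum, Finset.sum_image (fun a _ b _ hab => hinj hab)]
      simp [map_sum]
    rw [hzero] at hmem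
    exact absurd hmem (by decide)
  · rw [himg, Finset.card_image_of_injective _ hinj]
    decide
  · rw [himg, sigmaSet_image' φ hinj, Finset.card_image_of_injective _ hinj, s6]
    decide
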